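/- Symbol of the sub-Laplacian: for every Schwartz function h : ℝ → ℂ, every λ ∈ ℝ \ {0}, μ ∈ ℝ, and u ∈ ℝ, the functions t ↦ (π_{λ,μ}(t,0,0,0)h)(u) and t ↦ (π_{λ,μ}(0,t,0,0)h)(u) are twice differentiable at t = 0, and d²/dt²|_{t=0} (π_{λ,μ}(t,0,0,0)h)(u) + d²/dt²|_{t=0} (π_{λ,μ}(0,t,0,0)h)(u) = h''(u) − ¼(λu² − μ/λ)² h(u). -/

import Mathlib

/-! Along the first axis `π_{λ,μ}` translates `h`; along the second it multiplies `h(u)` by the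
character `t ↦ exp(i t (λu² − μ/λ)/2)`. The second derivatives at `0` are therefore `h''(u)` and
`(i(λu² − μ/λ)/2)² h(u) = −¼(λu² − μ/λ)² h(u)`. -/

open Complex

noncomputable section

/-- The action of the representation `π_{λ,μ}(x)` on a function `h : ℝ → ℂ`:
`(π_{λ,μ}(x)h)(u) = exp(i(−(μ/(2λ))x₂ + λx₄ − λx₃u + (λ/2)x₂u²)) · h(u + x₁)`. -/
def piAct (lam mu : ℝ) (x : ℝ × ℝ × ℝ × ℝ) (h : ℝ → ℂ) (u : ℝ) : ℂ :=
  Complex.exp (Complex.I *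
    ((-(mu / (2 * lam)) * x.2.1 + lam * x.2.2.2 - lam * x.2.2.1 * u
      + (lam / 2) * x.2.1 * u ^ 2 : ℝ) : ℂ)) * h (u + x.1)

theorem piAct_fst_axis (lam mu s : ℝ) (h : ℝ → ℂ) (u : ℝ) :
    piAct lam mu (s, 0, 0, 0) h u = h (u + s) := by
  simp [piAct]

theorem piAct_snd_axis (lam mu s : ℝ) (h : ℝ → ℂ) (u : ℝ) :
    piAct lam mu (0, s, 0, 0) h u
      = exp (s * (I * ((lam * u ^ 2 - mu / lam) / 2 : ℝ))) * h u := by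
  simp only [piAct, add_zero]
  congr 2
  push_cast
  ring

section Translation

variable {𝕜 E : Type*} [NontriviallyNormedField 𝕜] [NormedAddCommGroup E] [NormedSpace 𝕜 E]

theorem hasDerivAt_deriv_comp_const_add {f : 𝕜 → E} {a t : 𝕜}
    (hf : DifferentiableAt 𝕜 (deriv f) (a + t)) :
    HasDerivAt (deriv fun s ↦ f (a + s)) (deriv (deriv f) (a + t)) t := by
  rw [funext (deriv_comp_const_add f a)]
  exact hf.hasDerivAt.comp_const_add a t

end Translation

theorem hasDerivAt_cexp_ofReal_mul (b : ℂ) (t : ℝ) :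
    HasDerivAt (fun s : ℝ ↦ exp (s * b)) (b * exp (t * b)) t := by
  have hlin : HasDerivAt (fun s : ℝ ↦ (s : ℂ) * b) b t := by
    simpa using ofRealCLM.hasDerivAt.mul_const b
  simpa [mul_comm] using hlin.cexp

theorem deriv_cexp_ofReal_mul_mul_const (b c : ℂ) :
    deriv (fun s : ℝ ↦ exp (s * b) * c) = fun t : ℝ ↦ b * exp (t * b) * c :=
  funext fun t ↦ ((hasDerivAt_cexp_ofReal_mul b t).mul_const c).deriv

theorem hasDerivAt_deriv_cexp_ofReal_mul_mul_const (b c : ℂ) (t : ℝ) :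
    HasDerivAt (deriv fun s : ℝ ↦ exp (s * b) * c) (b ^ 2 * exp (t * b) * c) t := by
  rw [deriv_cexp_ofReal_mul_mul_const]
  exact (((hasDerivAt_cexp_ofReal_mul b t).const_mul b).mul_const c).congr_deriv (by ring)

/-- Symbol of the sub-Laplacian `ℒ = X₁² + X₂²`: for Schwartz `h`, `λ ≠ 0`, `μ`, `u`, the
curves `g₁ : t ↦ (π_{λ,μ}(t,0,0,0)h)(u)` and `g₂ : t ↦ (π_{λ,μ}(0,t,0,0)h)(u)` are twice
differentiable at `t = 0` and
`g₁''(0) + g₂''(0) = h''(u) − ¼(λu² − μ/λ)² h(u)`. -/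
theorem engel_sublaplacian_symbol :
    ∀ h : SchwartzMap ℝ ℂ, ∀ lam : ℝ, lam ≠ 0 → ∀ mu u : ℝ,
      (∀ t : ℝ, DifferentiableAt ℝ (fun s : ℝ => piAct lam mu (s, 0, 0, 0) h u) t) ∧
      (∀ t : ℝ, DifferentiableAt ℝ (fun s : ℝ => piAct lam mu (0, s, 0, 0) h u) t) ∧
      ∃ c₁ c₂ : ℂ,
        HasDerivAt (deriv (fun s : ℝ => piAct lam mu (s, 0, 0, 0) h u)) c₁ 0 ∧
        HasDerivAt (deriv (fun s : ℝ => piAct lam mu (0, s, 0, 0) h u)) c₂ 0 ∧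
        c₁ + c₂ = deriv (deriv (h : ℝ → ℂ)) u
          - (1 / 4 : ℂ) * ((lam * u ^ 2 - mu / lam : ℝ) : ℂ) ^ 2 * h u := by
  intro h lam _ mu u
  set b : ℂ := I * ((lam * u ^ 2 - mu / lam) / 2 : ℝ)
  simp only [piAct_fst_axis, piAct_snd_axis]
  have hderiv : Differentiable ℝ (deriv (h : ℝ → ℂ)) :=
    ((contDiff_infty_iff_deriv.mp (h.smooth ⊤)).2).differentiable (by simp)
  refine ⟨fun t ↦ (h.differentiableAt.hasDerivAt.comp_const_add u t).differentiableAt, fun t ↦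
      ((hasDerivAt_cexp_ofReal_mul b t).mul_const _).differentiableAt,
    _, _, by simpa using hasDerivAt_deriv_comp_const_add (hderiv (u + 0)),
    hasDerivAt_deriv_cexp_ofReal_mul_mul_const b (h u) 0, ?_⟩
  simp only [b, ofReal_zero, zero_mul, exp_zero, mul_one, mul_pow, I_sq]
  push_cast
  ring
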